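/- arXiv:1109.1776 — 3 statements merged into one kernel-verified Lean document; each statement's English description precedes it below -/
import Mathlib

section
/- Let p ∈ (1,∞), n ∈ ℕ, and let T_n : ℝ^ℕ → ℝ^ℕ be the stretch map defined by (T_n x)(kn) = x(k) for all k and by linear interpolation at intermediate indices, i.e., (T_n x)(kn + r) = x(k) + (r/n)(x(k+1) - x(k)) for 0 ≤ r < n. Then ‖T_n x‖_{J_p} = ‖x‖_{J_p} for every x with ‖x‖_{J_p} < ∞, where ‖x‖_{J_p} = sup over finite A ⊆ ℕ of ν_p(x, A). -/
/-- The `p`-th power of the seminorm `ν_p(x, A)`: the sum of `|x(n_j) - x(n_{j+1})|^p`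
over consecutive elements `n_j < n_{j+1}` of the increasing enumeration of `A`. -/
noncomputable def nuPow (p : ℝ) (x : ℕ → ℝ) (A : Finset ℕ) : ℝ :=
  ((A.sort (· ≤ ·)).zipWith (fun a b => |x a - x b| ^ p) (A.sort (· ≤ ·)).tail).sum

/-- The seminorm `ν_p(x, A) = (Σ_j |x(n_j) - x(n_{j+1})|^p)^{1/p}`. -/
noncomputable def nuP (p : ℝ) (x : ℕ → ℝ) (A : Finset ℕ) : ℝ := (nuPow p x A) ^ (1 / p)

/-- The stretch map `T_n`: `(T_n x)(kn) = x(k)`, with linear interpolation in between,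
i.e. `(T_n x)(kn + r) = x(k) + (r/n)(x(k+1) - x(k))` for `0 ≤ r < n`. -/
noncomputable def stretch (n : ℕ) (x : ℕ → ℝ) : ℕ → ℝ :=
  fun i => x (i / n) + ((i % n : ℕ) : ℝ) / (n : ℝ) * (x (i / n + 1) - x (i / n))

/-! On multiples of `n` the stretched sequence reproduces `x`, so `ν_p(T_n x, nA) = ν_p(x, A)`.
Conversely, on each block `[kn, (k+1)n]` the sequence `T_n x` is affine, and for `p ≥ 1` the
`p`-th power of `ν_p` is convex in each single value. Hence a point of a finite set `B` inside a
block can be pushed to an end of the block, or onto its successor in `B`, without decreasing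
`ν_p`; repeating this moves `B` onto multiples of `n`. The two families of values therefore
dominate each other, so their suprema agree. -/

open Set

noncomputable def pVariation (p : ℝ) : List ℝ → ℝ
  | a :: b :: l => |a - b| ^ p + pVariation p (b :: l)
  | _ => 0

section pVariation

variable {p : ℝ}

@[simp] lemma pVariation_singleton (a : ℝ) : pVariation p [a] = 0 := rfl

@[simp] lemma pVariation_cons_cons (a b : ℝ) (l : List ℝ) :
    pVariation p (a :: b :: l) = |a - b| ^ p + pVariation p (b :: l) := rfl

lemma pVariation_nonneg : ∀ l : List ℝ, 0 ≤ pVariation p l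
  | [] | [_] => le_rfl
  | a :: b :: l => by
    rw [pVariation_cons_cons]
    exact add_nonneg (by positivity) (pVariation_nonneg (b :: l))

lemma pVariation_append_cons (t : ℝ) (l₂ : List ℝ) :
    ∀ l₁ : List ℝ, pVariation p (l₁ ++ t :: l₂) = pVariation p (l₁ ++ [t]) + pVariation p (t :: l₂)
  | [] => by simp
  | [a] => by simp
  | a :: b :: l₁ => by
    have ih := pVariation_append_cons t l₂ (b :: l₁)
    simp only [List.cons_append] at ih ⊢
    rw [pVariation_cons_cons, pVariation_cons_cons, ih, add_assoc]

lemma pVariation_append_cons_cons_self (hp₀ : p ≠ 0) (l₁ l₂ : List ℝ) (v : ℝ) :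
    pVariation p (l₁ ++ v :: v :: l₂) = pVariation p (l₁ ++ v :: l₂) := by
  rw [pVariation_append_cons, pVariation_append_cons v l₂, pVariation_cons_cons, sub_self,
    abs_zero, Real.zero_rpow hp₀, zero_add]

lemma convexOn_abs_sub_rpow (hp : 1 ≤ p) (c : ℝ) : ConvexOn ℝ univ fun t : ℝ => |t - c| ^ p := by
  have himage : (fun t : ℝ => |t - c|) '' univ = Ici 0 := by
    ext s
    refine ⟨?_, fun hs => ⟨c + s, mem_univ _, by simpa using abs_of_nonneg (mem_Ici.1 hs)⟩⟩
    rintro ⟨t, -, rfl⟩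
    exact mem_Ici.2 (abs_nonneg _)
  refine ConvexOn.comp (g := fun s : ℝ => s ^ p) ?_ ?_ ?_
  · rw [himage]; exact convexOn_rpow hp
  · simpa [dist_eq_norm] using convexOn_univ_dist c
  · rw [himage]; exact Real.monotoneOn_rpow_Ici_of_exponent_nonneg (by linarith)

lemma convexOn_pVariation_cons (hp : 1 ≤ p) : ∀ l : List ℝ,
    ConvexOn ℝ univ fun t => pVariation p (t :: l)
  | [] => by simpa using convexOn_const (0 : ℝ) convex_univ
  | b :: l => by
    simp only [pVariation_cons_cons]
    exact (convexOn_abs_sub_rpow hp b).add (convexOn_const _ convex_univ)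

lemma convexOn_pVariation_concat (hp : 1 ≤ p) (l : List ℝ) :
    ConvexOn ℝ univ fun t => pVariation p (l ++ [t]) := by
  rcases l.eq_nil_or_concat' with rfl | ⟨l, a, rfl⟩
  · simpa using convexOn_const (0 : ℝ) convex_univ
  · have hsplit : ∀ t, pVariation p (l ++ [a] ++ [t]) = pVariation p (l ++ [a]) + |t - a| ^ p := by
      intro t
      rw [List.append_assoc, List.singleton_append, pVariation_append_cons a [t] l]
      simp [abs_sub_comm]
    simp only [hsplit]
    exact (convexOn_const _ convex_univ).add (convexOn_abs_sub_rpow hp a)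

lemma convexOn_pVariation_insert (hp : 1 ≤ p) (l₁ l₂ : List ℝ) :
    ConvexOn ℝ univ fun t => pVariation p (l₁ ++ t :: l₂) := by
  simp only [pVariation_append_cons _ l₂ l₁]
  exact (convexOn_pVariation_concat hp l₁).add (convexOn_pVariation_cons hp l₂)

lemma pVariation_le_or_le_of_mem_uIcc (hp : 1 ≤ p) (l₁ l₂ : List ℝ) {u v w : ℝ}
    (hv : v ∈ uIcc u w) :
    pVariation p (l₁ ++ v :: l₂) ≤ pVariation p (l₁ ++ u :: l₂) ∨
      pVariation p (l₁ ++ v :: l₂) ≤ pVariation p (l₁ ++ w :: l₂) := by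
  rw [← le_max_iff]
  exact (convexOn_pVariation_insert hp l₁ l₂).le_on_segment (mem_univ u) (mem_univ w)
    (segment_eq_uIcc u w ▸ hv)

end pVariation

section stretch

variable {n : ℕ} (x : ℕ → ℝ)

lemma stretch_mul_add_of_lt (k : ℕ) {r : ℕ} (hr : r < n) :
    stretch n x (k * n + r) = x k + r / n * (x (k + 1) - x k) := by
  have hn : 0 < n := by omega
  have hdiv : (k * n + r) / n = k := by
    rw [mul_comm, Nat.mul_add_div hn, Nat.div_eq_of_lt hr, add_zero]
  simp only [stretch, hdiv, Nat.mul_add_mod_self_right, Nat.mod_eq_of_lt hr]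

lemma stretch_mul (hn : 0 < n) (k : ℕ) : stretch n x (k * n) = x k := by
  simpa using stretch_mul_add_of_lt x k hn

lemma stretch_mul_add (hn : 0 < n) (k : ℕ) {r : ℕ} (hr : r ≤ n) :
    stretch n x (k * n + r) = x k + r / n * (x (k + 1) - x k) := by
  rcases hr.lt_or_eq with hr | rfl
  · exact stretch_mul_add_of_lt x k hr
  · rw [← Nat.succ_mul, stretch_mul x hn, div_self (by positivity)]
    ring

lemma stretch_mem_uIcc (hn : 0 < n) {k a b c : ℕ} (hka : k * n ≤ a) (hab : a ≤ b) (hbc : b ≤ c)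
    (hck : c ≤ (k + 1) * n) : stretch n x b ∈ uIcc (stretch n x a) (stretch n x c) := by
  obtain ⟨r, rfl⟩ := Nat.exists_eq_add_of_le hka
  obtain ⟨s, rfl⟩ := Nat.exists_eq_add_of_le hab
  obtain ⟨t, rfl⟩ := Nat.exists_eq_add_of_le hbc
  rw [Nat.succ_mul] at hck
  simp only [add_assoc]
  rw [stretch_mul_add x hn k (by omega), stretch_mul_add x hn k (by omega),
    stretch_mul_add x hn k (by omega)]
  have hrs : (r : ℝ) / n ≤ ((r + s : ℕ) : ℝ) / n := by gcongr; omega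
  have hst : ((r + s : ℕ) : ℝ) / n ≤ ((r + (s + t) : ℕ) : ℝ) / n := by gcongr; omega
  rcases le_total (x k) (x (k + 1)) with h | h
  · exact mem_uIcc_of_le (by gcongr) (by gcongr)
  · exact mem_uIcc_of_ge (by nlinarith) (by nlinarith)

end stretch

lemma List.IsChain.append_cons_of_rel {α : Type*} {R : α → α → Prop} {l₁ l₂ : List α} {a b : α}
    (hl : (l₁ ++ a :: l₂).IsChain R) (hlast : ∀ c ∈ l₁.getLast?, R c b)
    (hhead : ∀ c ∈ l₂.head?, R b c) : (l₁ ++ b :: l₂).IsChain R := by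
  obtain ⟨h₁, h₂, -⟩ := List.isChain_append.1 hl
  refine List.isChain_append.2 ⟨h₁, List.isChain_cons.2 ⟨hhead, (List.isChain_cons.1 h₂).2⟩, ?_⟩
  intro c hc _ hb
  cases hb
  exact hlast c hc

lemma exists_countP_lt_of_replace {p : ℝ} (hp₀ : p ≠ 0) (f : ℕ → ℝ) (P : ℕ → Bool)
    {l₁ l₂ : List ℕ} {i c : ℕ} (hl : (l₁ ++ i :: l₂).IsChain (· ≤ ·)) (hi : P i)
    (hc : P c = false ∨ l₂.head? = some c) (hlast : ∀ a ∈ l₁.getLast?, a ≤ c)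
    (hhead : ∀ b ∈ l₂.head?, c ≤ b) :
    ∃ l : List ℕ, l.IsChain (· ≤ ·) ∧ l.countP P < (l₁ ++ i :: l₂).countP P ∧
      pVariation p ((l₁ ++ c :: l₂).map f) ≤ pVariation p (l.map f) := by
  rcases hc with hc | hc
  · exact ⟨_, hl.append_cons_of_rel hlast hhead, by simp [List.countP_append, hi, hc], le_rfl⟩
  · obtain ⟨l₂, rfl⟩ : ∃ l, l₂ = c :: l := by
      cases l₂ with
      | nil => simp at hc
      | cons b l => exact ⟨l, by simpa using hc⟩
    refine ⟨l₁ ++ c :: l₂, hl.sublist ((List.sublist_cons_self i _).append_left l₁),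
      by simp [List.countP_append, hi], ?_⟩
    simp [pVariation_append_cons_cons_self hp₀]

lemma exists_countP_not_dvd_lt {p : ℝ} (hp : 1 ≤ p) {n : ℕ} (hn : 0 < n) (x : ℕ → ℝ)
    {l₁ l₂ : List ℕ} {i : ℕ} (hl : (l₁ ++ i :: l₂).IsChain (· ≤ ·)) (hl₁ : ∀ a ∈ l₁, n ∣ a)
    (hi : ¬ n ∣ i) :
    ∃ l : List ℕ, l.IsChain (· ≤ ·) ∧
      l.countP (fun j => ¬ n ∣ j) < (l₁ ++ i :: l₂).countP (fun j => ¬ n ∣ j) ∧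
      pVariation p ((l₁ ++ i :: l₂).map (stretch n x)) ≤ pVariation p (l.map (stretch n x)) := by
  set k := i / n
  obtain ⟨-, h₂, hcross⟩ := List.isChain_append.1 hl
  have hik : i < (k + 1) * n := by rw [Nat.succ_mul]; exact Nat.lt_div_mul_add hn
  have hlast : ∀ a ∈ l₁.getLast?, a ≤ k * n := by
    intro a ha
    obtain ⟨m, rfl⟩ := hl₁ a (List.mem_of_getLast? ha)
    rw [mul_comm]
    exact Nat.mul_le_mul_right n ((Nat.le_div_iff_mul_le hn).2 (mul_comm m n ▸ hcross _ ha i rfl))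
  have hnext : ∀ b ∈ l₂.head?, i ≤ b := (List.isChain_cons.1 h₂).1
  -- `i` may move up to `c` inside its block without overtaking its successor
  obtain ⟨c, hc, hic, hck, hcb⟩ : ∃ c, (n ∣ c ∨ l₂.head? = some c) ∧ i ≤ c ∧ c ≤ (k + 1) * n ∧
      ∀ b ∈ l₂.head?, c ≤ b := by
    rcases hb : l₂.head? with _ | b
    · exact ⟨(k + 1) * n, Or.inl (dvd_mul_left n _), hik.le, le_rfl, by simp⟩
    · by_cases hbk : b < (k + 1) * n
      · exact ⟨b, Or.inr rfl, hnext b hb, hbk.le, by simp⟩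
      · exact ⟨(k + 1) * n, Or.inl (dvd_mul_left n _), hik.le, le_rfl, by simpa using hbk⟩
  have hmem := stretch_mem_uIcc x hn le_rfl (Nat.div_mul_le_self i n) hic hck
  have hp₀ : p ≠ 0 := by positivity
  simp only [List.map_append, List.map_cons]
  rcases pVariation_le_or_le_of_mem_uIcc hp (l₁.map (stretch n x)) (l₂.map (stretch n x)) hmem
    with h | h
  · obtain ⟨l, hl', hlt, hle⟩ := exists_countP_lt_of_replace hp₀ (stretch n x) (fun j => ¬ n ∣ j) hl
      (by simpa using hi) (Or.inl (by simp)) hlast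
      (fun b hb => (Nat.div_mul_le_self i n).trans (hnext b hb))
    exact ⟨l, hl', hlt, h.trans (by simpa using hle)⟩
  · obtain ⟨l, hl', hlt, hle⟩ := exists_countP_lt_of_replace hp₀ (stretch n x) (fun j => ¬ n ∣ j) hl
      (by simpa using hi) (hc.imp_left (by simpa using ·))
      (fun a ha => (hcross a ha i rfl).trans hic) hcb
    exact ⟨l, hl', hlt, h.trans (by simpa using hle)⟩

lemma exists_isChain_dvd_pVariation_le {p : ℝ} (hp : 1 ≤ p) {n : ℕ} (hn : 0 < n) (x : ℕ → ℝ)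
    (l : List ℕ) (hl : l.IsChain (· ≤ ·)) :
    ∃ m : List ℕ, m.IsChain (· ≤ ·) ∧ (∀ j ∈ m, n ∣ j) ∧
      pVariation p (l.map (stretch n x)) ≤ pVariation p (m.map (stretch n x)) := by
  induction hN : l.countP (fun j => ¬ n ∣ j) using Nat.strong_induction_on generalizing l with
  | _ N ih =>
  rcases hfind : l.find? (fun j => ¬ n ∣ j) with _ | i
  · exact ⟨l, hl, by simpa using List.find?_eq_none.1 hfind, le_rfl⟩
  · obtain ⟨hi, l₁, l₂, rfl, hl₁⟩ := List.find?_eq_some_iff_append.1 hfind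
    obtain ⟨l', hl', hlt, hle⟩ :=
      exists_countP_not_dvd_lt hp hn x hl (by simpa using hl₁) (by simpa using hi)
    obtain ⟨m, hm, hdvd, hle'⟩ := ih _ (hN ▸ hlt) l' hl' rfl
    exact ⟨m, hm, hdvd, hle.trans hle'⟩

lemma nuPow_eq_pVariation (p : ℝ) (x : ℕ → ℝ) (A : Finset ℕ) :
    nuPow p x A = pVariation p ((A.sort (· ≤ ·)).map x) := by
  suffices h : ∀ l : List ℕ,
      (l.zipWith (fun a b => |x a - x b| ^ p) l.tail).sum = pVariation p (l.map x) from h _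
  intro l
  induction l with
  | nil => rfl
  | cons a l ih =>
    cases l with
    | nil => rfl
    | cons b l => simpa using ih

lemma nuPow_toFinset {p : ℝ} (hp₀ : p ≠ 0) (x : ℕ → ℝ) (l : List ℕ) (hl : l.IsChain (· ≤ ·)) :
    nuPow p x l.toFinset = pVariation p (l.map x) := by
  induction hN : l.length using Nat.strong_induction_on generalizing l with
  | _ N ih =>
  by_cases hlt : l.IsChain (· < ·)
  · have hsorted := List.isChain_iff_pairwise.1 hlt
    rw [nuPow_eq_pVariation, (List.toFinset_sort _ (hsorted.imp ne_of_lt)).2 (hsorted.imp le_of_lt)]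
  · obtain ⟨a, b, l₁, l₂, rfl, hab⟩ : ∃ a b l₁ l₂, l = l₁ ++ a :: b :: l₂ ∧ ¬ a < b := by
      simpa [List.isChain_iff_forall_rel_of_append_cons_cons] using hlt
    obtain rfl : a = b := le_antisymm (List.isChain_append_cons_cons.1 hl).2.1 (not_lt.1 hab)
    have hl' : (l₁ ++ a :: l₂).IsChain (· ≤ ·) :=
      hl.sublist (((List.sublist_cons_self a l₂).cons_cons a).append_left l₁)
    have htoFinset : (l₁ ++ a :: a :: l₂).toFinset = (l₁ ++ a :: l₂).toFinset := by
      ext; simp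
    rw [htoFinset, ih _ (by simp [← hN]) _ hl' rfl]
    simp [pVariation_append_cons_cons_self hp₀]

lemma exists_nuPow_stretch_le {p : ℝ} (hp : 1 ≤ p) {n : ℕ} (hn : 0 < n) (x : ℕ → ℝ)
    (B : Finset ℕ) : ∃ A : Finset ℕ, nuPow p (stretch n x) B ≤ nuPow p x A := by
  obtain ⟨m, hm, hdvd, hle⟩ := exists_isChain_dvd_pVariation_le hp hn x (B.sort (· ≤ ·))
    (List.isChain_iff_pairwise.2 (B.pairwise_sort _))
  have hm' : (m.map (· / n)).IsChain (· ≤ ·) :=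
    List.isChain_map_of_isChain (· / n) (fun _ _ h => Nat.div_le_div_right h) hm
  refine ⟨(m.map (· / n)).toFinset, ?_⟩
  rw [nuPow_eq_pVariation, nuPow_toFinset (by positivity) x _ hm', List.map_map]
  refine hle.trans_eq (congrArg _ (List.map_congr_left fun j hj => ?_))
  obtain ⟨k, rfl⟩ := hdvd j hj
  simp [mul_comm n k, stretch_mul x hn, Nat.mul_div_cancel _ hn]

lemma nuPow_stretch_image_mul {p : ℝ} (hp₀ : p ≠ 0) {n : ℕ} (hn : 0 < n) (x : ℕ → ℝ)
    (A : Finset ℕ) : nuPow p (stretch n x) (A.image (· * n)) = nuPow p x A := by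
  have himage : A.image (· * n) = ((A.sort (· ≤ ·)).map (· * n)).toFinset := by
    ext
    simp
  rw [himage, nuPow_toFinset hp₀, List.map_map, nuPow_eq_pVariation]
  · simp [Function.comp_def, stretch_mul x hn]
  · exact List.isChain_map_of_isChain _ (fun _ _ h => Nat.mul_le_mul_right n h)
      (List.isChain_iff_pairwise.2 (A.pairwise_sort _))

theorem stretch_isometry_general (p : ℝ) (hp : 1 < p) (n : ℕ) (hn : 0 < n) (x : ℕ → ℝ) :
    (⨆ A : Finset ℕ, nuP p (stretch n x) A) = ⨆ A : Finset ℕ, nuP p x A := by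
  refine csSup_eq_csSup_of_forall_exists_le ?_ ?_
  · rintro _ ⟨B, rfl⟩
    obtain ⟨A, hA⟩ := exists_nuPow_stretch_le hp.le hn x B
    have h0 : 0 ≤ nuPow p (stretch n x) B := by
      rw [nuPow_eq_pVariation]
      exact pVariation_nonneg _
    exact ⟨_, ⟨A, rfl⟩, Real.rpow_le_rpow h0 hA (by positivity)⟩
  · rintro _ ⟨A, rfl⟩
    exact ⟨_, ⟨A.image (· * n), rfl⟩,
      (congrArg (· ^ (1 / p)) (nuPow_stretch_image_mul (by positivity) hn x A)).ge⟩

/-- The stretch map `T_n` is an isometry for the James `p`-norm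
`‖x‖_{J_p} = sup_A ν_p(x, A)` over finite `A ⊆ ℕ`. -/
theorem stretch_isometry (p : ℝ) (hp : 1 < p) (n : ℕ) (hn : 0 < n) (x : ℕ → ℝ)
    (hx : BddAbove (Set.range fun A : Finset ℕ => nuP p x A)) :
    (⨆ A : Finset ℕ, nuP p (stretch n x) A) = ⨆ A : Finset ℕ, nuP p x A :=
  stretch_isometry_general p hp n hn x
end

section
/- Let p ∈ (1,∞), ℓ ∈ ℕ, and suppose C₁,…,C_ℓ and D₁,…,D_ℓ are finite subsets of ℕ with min C_j = min D_j = m_j and max C_j = max D_j = m'_j, where m'_j ≤ m_{j+1} for each j < ℓ. Suppose E₁,…,E_{ℓ-1} are finite subsets of ℕ with min E_j = m'_j and max E_j = m_{j+1}, and set E_ℓ = {m'_ℓ}. Then for every v : ℕ → ℝ, Σ_{j=1}^ℓ (ν_p(v, D_j)^p - ν_p(v, C_j)^p) = ν_p(v, ∪_j (D_j ∪ E_j))^p - ν_p(v, ∪_j (C_j ∪ E_j))^p. -/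
open Finset

def adjacentSum {α M : Type*} [AddCommMonoid M] (f : α → α → M) (l : List α) : M :=
  (l.zipWith f l.tail).sum

theorem adjacentSum_append_cons {α M : Type*} [AddCommMonoid M] (f : α → α → M) (c : α) :
    ∀ l l' : List α,
      adjacentSum f (l ++ c :: l') = adjacentSum f (l ++ [c]) + adjacentSum f (c :: l')
  | [], _ => by simp [adjacentSum]
  | [_], _ => by simp [adjacentSum]
  | a :: b :: l, l' => by
    have ih := adjacentSum_append_cons f c (b :: l) l'
    simp only [adjacentSum, List.cons_append, List.tail_cons, List.zipWith_cons_cons,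
      List.sum_cons] at ih ⊢
    rw [ih, add_assoc]

theorem nuPow_eq_adjacentSum (p : ℝ) (x : ℕ → ℝ) (A : Finset ℕ) :
    nuPow p x A = adjacentSum (fun a b => |x a - x b| ^ p) A.sort := rfl

theorem sort_union_of_forall_lt {α : Type*} [LinearOrder α] {A B : Finset α} (h : ∀ a ∈ A, ∀ b ∈ B, a < b) :
    (A ∪ B).sort = A.sort ++ B.sort := by
  have hsorted : (A.sort ++ B.sort).SortedLT := by
    refine List.Pairwise.sortedLT (List.pairwise_append.2 ⟨?_, ?_, ?_⟩)
    · exact (sortedLT_sort A).pairwise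
    · exact (sortedLT_sort B).pairwise
    · intro a ha b hb
      exact h a (mem_sort _ |>.1 ha) b (mem_sort _ |>.1 hb)
  exact (sortedLT_sort _).eq_of_mem_iff hsorted (by simp)

theorem nuPow_union {A B : Finset ℕ} {c : ℕ} (hA : IsGreatest (A : Set ℕ) c)
    (hB : IsLeast (B : Set ℕ) c) (p : ℝ) (x : ℕ → ℝ) :
    nuPow p x (A ∪ B) = nuPow p x A + nuPow p x B := by
  have hltc : ∀ a ∈ A.erase c, a < c := fun a ha =>
    (hA.2 (mem_of_mem_erase ha)).lt_of_ne (ne_of_mem_erase ha)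
  have hsortA : A.sort = (A.erase c).sort ++ [c] := by
    rw [← sort_singleton (· ≤ ·) c, ← sort_union_of_forall_lt (by simpa using hltc),
      erase_union_eq c A hA.1]
  have hsortB : B.sort = c :: (B.erase c).sort := by
    conv_lhs => rw [← insert_erase hB.1]
    exact sort_insert _ (fun b hb => hB.2 (mem_of_mem_erase hb)) (notMem_erase c B)
  have hsortAB : (A ∪ B).sort = (A.erase c).sort ++ c :: (B.erase c).sort := by
    rw [← hsortB, ← sort_union_of_forall_lt fun a ha b hb => (hltc a ha).trans_le (hB.2 hb),
      erase_union_of_mem hB.1]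
  rw [nuPow_eq_adjacentSum, nuPow_eq_adjacentSum, nuPow_eq_adjacentSum, hsortA, hsortB, hsortAB]
  exact adjacentSum_append_cons _ c _ _

theorem isGreatest_biUnion_of_chain {α : Type*} [Preorder α] [DecidableEq α] {n : ℕ}
    {f : Fin (n + 1) → Finset α} {m : Fin (n + 2) → α}
    (hleast : ∀ i, IsLeast (f i : Set α) (m i.castSucc))
    (hgreatest : ∀ i, IsGreatest (f i : Set α) (m i.succ)) :
    IsGreatest (univ.biUnion f : Set α) (m (Fin.last _)) := by
  have hmono : Monotone m :=
    Fin.monotone_iff_le_succ.2 fun i => (hleast i).2 (hgreatest i).1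
  refine ⟨?_, ?_⟩
  · rw [← Fin.succ_last]
    exact mem_biUnion.2 ⟨_, mem_univ _, (hgreatest _).1⟩
  · intro b hb
    obtain ⟨i, -, hbi⟩ := mem_biUnion.1 hb
    exact ((hgreatest i).2 hbi).trans (hmono (Fin.le_last _))

theorem biUnion_univ_fin_succ {α : Type*} [DecidableEq α] {k : ℕ} (g : Fin (k + 1) → Finset α) :
    univ.biUnion g = (univ.biUnion fun i : Fin k => g i.castSucc) ∪ g (Fin.last k) := by
  ext a
  simp [Fin.exists_fin_succ']

section Chain

variable {n : ℕ} {f : Fin (n + 1) → Finset ℕ} {m : Fin (n + 2) → ℕ}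

theorem nuPow_biUnion_of_chain (hleast : ∀ i, IsLeast (f i : Set ℕ) (m i.castSucc))
    (hgreatest : ∀ i, IsGreatest (f i : Set ℕ) (m i.succ)) (p : ℝ) (x : ℕ → ℝ) :
    nuPow p x (univ.biUnion f) = ∑ i, nuPow p x (f i) := by
  induction n with
  | zero => simp
  | succ n ih =>
    have hleast' : ∀ i : Fin (n + 1), IsLeast (f i.castSucc : Set ℕ) (m i.castSucc.castSucc) :=
      fun i => hleast _
    have hgreatest' : ∀ i : Fin (n + 1), IsGreatest (f i.castSucc : Set ℕ) (m i.succ.castSucc) :=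
      fun i => Fin.succ_castSucc i ▸ hgreatest _
    rw [biUnion_univ_fin_succ, nuPow_union
      (isGreatest_biUnion_of_chain (m := fun i => m i.castSucc) hleast' hgreatest') (hleast _),
      ih (m := fun i => m i.castSucc) hleast' hgreatest']
    exact (Fin.sum_univ_castSucc fun i => nuPow p x (f i)).symm

theorem nuPow_biUnion_union_of_chain {A E : Fin (n + 1) → Finset ℕ} {c : Fin (n + 1) → ℕ}
    (hA_least : ∀ i, IsLeast (A i : Set ℕ) (m i.castSucc))
    (hA_greatest : ∀ i, IsGreatest (A i : Set ℕ) (c i)) (hE_least : ∀ i, IsLeast (E i : Set ℕ) (c i))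
    (hE_greatest : ∀ i, IsGreatest (E i : Set ℕ) (m i.succ)) (p : ℝ) (x : ℕ → ℝ) :
    nuPow p x (univ.biUnion fun i => A i ∪ E i) = ∑ i, nuPow p x (A i) + ∑ i, nuPow p x (E i) := by
  have hleast : ∀ i, IsLeast (↑(A i ∪ E i) : Set ℕ) (m i.castSucc) := fun i => by
    simpa [coe_union, min_eq_left ((hA_least i).2 (hA_greatest i).1)] using
      (hA_least i).union (hE_least i)
  have hgreatest : ∀ i, IsGreatest (↑(A i ∪ E i) : Set ℕ) (m i.succ) := fun i => by
    simpa [coe_union, max_eq_right ((hE_greatest i).2 (hE_least i).1)] using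
      (hA_greatest i).union (hE_greatest i)
  rw [nuPow_biUnion_of_chain hleast hgreatest, ← sum_add_distrib]
  exact sum_congr rfl fun i _ => nuPow_union (hA_greatest i) (hE_least i) p x

end Chain

theorem isLeast_isGreatest_of_gaps {n : ℕ} {C E : Fin (n + 1) → Finset ℕ}
    (hC : ∀ j, (C j).Nonempty) (hE : ∀ j, (E j).Nonempty)
    (hgap : ∀ j : Fin n, (E j.castSucc).min' (hE _) = (C j.castSucc).max' (hC _) ∧
      (E j.castSucc).max' (hE _) = (C j.succ).min' (hC _))
    (hlast : E (Fin.last n) = {(C (Fin.last n)).max' (hC _)}) (j : Fin (n + 1)) :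
    IsLeast (E j : Set ℕ) ((C j).max' (hC j)) ∧
      IsGreatest (E j : Set ℕ)
        (Fin.snoc (α := fun _ => ℕ) (fun i => (C i).min' (hC i)) ((C (Fin.last n)).max' (hC _))
          j.succ) := by
  cases j using Fin.lastCases with
  | last =>
    rw [hlast, Fin.succ_last]
    simp [isLeast_singleton, isGreatest_singleton]
  | cast k =>
    obtain ⟨hmin_E, hmax_E⟩ := hgap k
    refine ⟨hmin_E ▸ (E _).isLeast_min' _, ?_⟩
    rw [Fin.succ_castSucc, Fin.snoc_castSucc, ← hmax_E]
    exact (E _).isGreatest_max' _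

/-- The gap-filling lemma: if `C_j` and `D_j` share minima `m_j` and maxima `m'_j`,
the blocks come in increasing order, and `E_j` connects `m'_j` to `m_{j+1}`
(with `E_ℓ = {m'_ℓ}`), then
`Σ_j (ν_p(v,D_j)^p - ν_p(v,C_j)^p) = ν_p(v, ∪(D_j ∪ E_j))^p - ν_p(v, ∪(C_j ∪ E_j))^p`. -/
theorem nuPow_fill_gaps (p : ℝ) (ℓ : ℕ) (hℓ : 0 < ℓ)
    (C D E : Fin ℓ → Finset ℕ)
    (hC : ∀ j, (C j).Nonempty) (hD : ∀ j, (D j).Nonempty) (hE : ∀ j, (E j).Nonempty)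
    (hmin : ∀ j (hCj : (C j).Nonempty) (hDj : (D j).Nonempty),
      (D j).min' hDj = (C j).min' hCj)
    (hmax : ∀ j (hCj : (C j).Nonempty) (hDj : (D j).Nonempty),
      (D j).max' hDj = (C j).max' hCj)
    (hEmin : ∀ j : Fin ℓ, ∀ h : (j : ℕ) + 1 < ℓ,
      (E j).min' (hE j) = (C j).max' (hC j) ∧
      (E j).max' (hE j) = (C ⟨j + 1, h⟩).min' (hC ⟨j + 1, h⟩))
    (hElast : E ⟨ℓ - 1, by omega⟩ = {(C ⟨ℓ - 1, by omega⟩).max' (hC ⟨ℓ - 1, by omega⟩)})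
    (v : ℕ → ℝ) :
    ∑ j, (nuPow p v (D j) - nuPow p v (C j)) =
      nuPow p v (Finset.univ.biUnion fun j => D j ∪ E j) -
        nuPow p v (Finset.univ.biUnion fun j => C j ∪ E j) := by
  obtain ⟨n, rfl⟩ : ∃ n, ℓ = n + 1 := ⟨ℓ - 1, by omega⟩
  have hE_bounds := isLeast_isGreatest_of_gaps hC hE (fun k => hEmin k.castSucc (by simp)) hElast
  set c : Fin (n + 1) → ℕ := fun j => (C j).max' (hC j)
  set m : Fin (n + 2) → ℕ := Fin.snoc (fun j => (C j).min' (hC j)) (c (Fin.last n))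
  have hC_least : ∀ j, IsLeast (C j : Set ℕ) (m j.castSucc) := fun j => by
    simpa [m] using (C j).isLeast_min' (hC j)
  have hD_least : ∀ j, IsLeast (D j : Set ℕ) (m j.castSucc) := fun j => by
    simpa [m, hmin j (hC j) (hD j)] using (D j).isLeast_min' (hD j)
  have hC_greatest : ∀ j, IsGreatest (C j : Set ℕ) (c j) := fun j => (C j).isGreatest_max' (hC j)
  have hD_greatest : ∀ j, IsGreatest (D j : Set ℕ) (c j) := fun j => by
    simpa [c, hmax j (hC j) (hD j)] using (D j).isGreatest_max' (hD j)
  rw [nuPow_biUnion_union_of_chain hD_least hD_greatest (fun j => (hE_bounds j).1)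
      (fun j => (hE_bounds j).2),
    nuPow_biUnion_union_of_chain hC_least hC_greatest (fun j => (hE_bounds j).1)
      (fun j => (hE_bounds j).2), sum_sub_distrib]
  ring
end

section
/- Let p ∈ (1,∞) and let x : ℕ → ℝ, supported on [0, 2m-1], with |x(j) - x(j+1)|^p ≤ γ/(2m) for all 0 ≤ j < 2m, where γ > 0. Let n be a positive even integer, let T_n be the stretch-by-n operator (linear interpolation), let z = γ^{1/p} z_{2mn}, and let w = T_n x + z. Then max_{0 ≤ j < 2mn} |w(j) - w(j+1)|^p ≤ (γ/(2mn)) (1 + n^{-(1 - 1/p)})^p. -/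
/-- The spiky vector `z_{2k}`. -/
noncomputable def spiky (p : ℝ) (k : ℕ) : ℕ → ℝ :=
  fun n => if Odd n ∧ n < 2 * k then ((2 * k : ℕ) : ℝ) ^ (-(1 / p)) else 0

/-!
On each block `[kn, (k+1)n]` the stretched sequence `T_n x` is affine, so its consecutive
differences are `(x(k) - x(k+1))/n`, of size at most `(γ/(2m))^{1/p}/n`, while the spiky vector
`γ^{1/p} z_{2mn}` changes by exactly `(γ/(2mn))^{1/p}` at every step before `2mn`. The triangle
inequality bounds the difference of `w` by the sum `(γ/(2mn))^{1/p} (1 + n^{1/p - 1})`, and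
raising to the `p`-th power gives the claim.
-/

lemma stretch_sub_stretch_succ {n : ℕ} (hn : 0 < n) (x : ℕ → ℝ) (j : ℕ) :
    stretch n x j - stretch n x (j + 1) = (x (j / n) - x (j / n + 1)) / n := by
  obtain ⟨k, r, hr, rfl⟩ : ∃ k r, r < n ∧ j = n * k + r :=
    ⟨j / n, j % n, Nat.mod_lt _ hn, (Nat.div_add_mod j n).symm⟩
  have hn' : (n : ℝ) ≠ 0 := by positivity
  have hdiv : (n * k + r) / n = k := by rw [Nat.mul_add_div hn, Nat.div_eq_of_lt hr, add_zero]
  have hmod : (n * k + r) % n = r := by rw [Nat.mul_add_mod, Nat.mod_eq_of_lt hr]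
  rcases (Nat.succ_le_of_lt hr).lt_or_eq with hlt | heq
  · have hdiv' : (n * k + r + 1) / n = k := by
      rw [add_assoc, Nat.mul_add_div hn, Nat.div_eq_of_lt hlt, add_zero]
    have hmod' : (n * k + r + 1) % n = r + 1 := by
      rw [add_assoc, Nat.mul_add_mod, Nat.mod_eq_of_lt hlt]
    simp only [stretch, hdiv, hmod, hdiv', hmod']
    push_cast
    field_simp
    ring
  · have hsucc : n * k + r + 1 = n * (k + 1) := by rw [mul_add, mul_one, ← heq, add_assoc]
    have hr' : (r : ℝ) = n - 1 := by rw [← heq]; push_cast; ring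
    simp only [stretch, hdiv, hmod, hsucc, Nat.mul_div_cancel_left _ hn, Nat.mul_mod_right, hr']
    push_cast
    field_simp
    ring

lemma abs_spiky_sub_spiky_succ (p : ℝ) {k j : ℕ} (hj : j < 2 * k) :
    |spiky p k j - spiky p k (j + 1)| = ((2 * k : ℕ) : ℝ) ^ (-(1 / p)) := by
  have hpos : (0 : ℝ) ≤ ((2 * k : ℕ) : ℝ) ^ (-(1 / p)) := by positivity
  unfold spiky
  rcases Nat.even_or_odd j with ⟨i, rfl⟩ | ⟨i, rfl⟩
  · have hlt : i + i + 1 < 2 * k := by omega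
    rw [if_neg fun h => Nat.not_odd_iff_even.2 ⟨i, rfl⟩ h.1, if_pos ⟨⟨i, by ring⟩, hlt⟩,
      zero_sub, abs_neg, abs_of_nonneg hpos]
  · rw [if_pos ⟨⟨i, rfl⟩, hj⟩, if_neg fun h => Nat.not_odd_iff_even.2 ⟨i + 1, by ring⟩ h.1,
      sub_zero, abs_of_nonneg hpos]

lemma abs_stretch_add_spiky_sub_le {n : ℕ} (hn : 0 < n) (x : ℕ → ℝ) (p : ℝ) {c : ℝ}
    (hc : 0 ≤ c) {k j : ℕ} (hj : j < 2 * k) :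
    |(stretch n x j + c * spiky p k j) - (stretch n x (j + 1) + c * spiky p k (j + 1))| ≤
      |x (j / n) - x (j / n + 1)| / n + c * ((2 * k : ℕ) : ℝ) ^ (-(1 / p)) :=
  calc |(stretch n x j + c * spiky p k j) - (stretch n x (j + 1) + c * spiky p k (j + 1))|
      = |(stretch n x j - stretch n x (j + 1)) + c * (spiky p k j - spiky p k (j + 1))| := by
        ring_nf
    _ ≤ |stretch n x j - stretch n x (j + 1)| + |c * (spiky p k j - spiky p k (j + 1))| :=
        abs_add_le _ _
    _ = |x (j / n) - x (j / n + 1)| / n + c * ((2 * k : ℕ) : ℝ) ^ (-(1 / p)) := by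
        rw [stretch_sub_stretch_succ hn, abs_div, Nat.abs_cast, abs_mul, abs_of_nonneg hc,
          abs_spiky_sub_spiky_succ p hj]

lemma rpow_div_div_add_rpow_mul_rpow_neg {γ a b : ℝ} (p : ℝ) (hγ : 0 ≤ γ) (ha : 0 < a)
    (hb : 0 < b) :
    (γ / a) ^ (1 / p) / b + γ ^ (1 / p) * (a * b) ^ (-(1 / p)) =
      (γ / (a * b)) ^ (1 / p) * (1 + b ^ (-(1 - 1 / p))) := by
  rw [Real.rpow_neg (by positivity), Real.div_rpow hγ ha.le, Real.div_rpow hγ (by positivity),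
    Real.mul_rpow ha.le hb.le, neg_sub, Real.rpow_sub hb, Real.rpow_one]
  field_simp
  ring

theorem stretched_spiky_diff_bound_general (p : ℝ) (hp : 1 < p) (m : ℕ) (hm : 0 < m)
    (γ : ℝ) (hγ : 0 < γ) (x : ℕ → ℝ)
    (hdiff : ∀ j, j < 2 * m → |x j - x (j + 1)| ^ p ≤ γ / (2 * m))
    (n : ℕ) (hn : 0 < n) :
    ∀ j, j < 2 * m * n →
      |(stretch n x j + γ ^ (1 / p) * spiky p (m * n) j) -
        (stretch n x (j + 1) + γ ^ (1 / p) * spiky p (m * n) (j + 1))| ^ p ≤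
      γ / (2 * m * n) * (1 + (n : ℝ) ^ (-(1 - 1 / p))) ^ p := by
  intro j hj
  have hp0 : 0 < p := one_pos.trans hp
  have hjk : j / n < 2 * m := Nat.div_lt_of_lt_mul (by rwa [mul_comm n])
  have hx : |x (j / n) - x (j / n + 1)| ≤ (γ / (2 * m)) ^ (1 / p) := by
    rw [one_div]
    exact (Real.le_rpow_inv_iff_of_pos (abs_nonneg _) (by positivity) hp0).2 (hdiff _ hjk)
  have hw : |(stretch n x j + γ ^ (1 / p) * spiky p (m * n) j) -
      (stretch n x (j + 1) + γ ^ (1 / p) * spiky p (m * n) (j + 1))| ≤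
      (γ / (2 * m * n)) ^ (1 / p) * (1 + (n : ℝ) ^ (-(1 - 1 / p))) := by
    calc _ ≤ |x (j / n) - x (j / n + 1)| / n +
          γ ^ (1 / p) * ((2 * (m * n) : ℕ) : ℝ) ^ (-(1 / p)) :=
          abs_stretch_add_spiky_sub_le hn x p (by positivity) (by rwa [← mul_assoc])
      _ ≤ (γ / (2 * m)) ^ (1 / p) / n + γ ^ (1 / p) * (2 * m * n : ℝ) ^ (-(1 / p)) := by
          push_cast [← mul_assoc]
          gcongr
      _ = _ := rpow_div_div_add_rpow_mul_rpow_neg p hγ.le (by positivity) (by positivity)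
  calc _ ≤ ((γ / (2 * m * n)) ^ (1 / p) * (1 + (n : ℝ) ^ (-(1 - 1 / p)))) ^ p :=
        Real.rpow_le_rpow (abs_nonneg _) hw hp0.le
    _ = _ := by
        rw [Real.mul_rpow (by positivity) (by positivity), one_div,
          Real.rpow_inv_rpow (by positivity) hp0.ne']

/-- Bound on the consecutive differences of `w = T_n x + γ^{1/p} z_{2mn}`. -/
theorem stretched_spiky_diff_bound (p : ℝ) (hp : 1 < p) (m : ℕ) (hm : 0 < m)
    (γ : ℝ) (hγ : 0 < γ) (x : ℕ → ℝ)
    (hsupp : ∀ j, 2 * m ≤ j → x j = 0)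
    (hdiff : ∀ j, j < 2 * m → |x j - x (j + 1)| ^ p ≤ γ / (2 * m))
    (n : ℕ) (hn : 0 < n) (hneven : Even n) :
    ∀ j, j < 2 * m * n →
      |(stretch n x j + γ ^ (1 / p) * spiky p (m * n) j) -
        (stretch n x (j + 1) + γ ^ (1 / p) * spiky p (m * n) (j + 1))| ^ p ≤
      γ / (2 * m * n) * (1 + (n : ℝ) ^ (-(1 - 1 / p))) ^ p :=
  stretched_spiky_diff_bound_general p hp m hm γ hγ x hdiff n hn
end
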